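/- arXiv:2207.08721 — 2 statements merged into one kernel-verified Lean document; each statement's English description precedes it below -/
import Mathlib

section
/- Let X, Y ∈ M_n(ℂ) and suppose there exist unit-modulus complex numbers z, w such that W(zX) ⊂ S_{α₁} and W(wY) ⊂ S_{α₂} with α₁, α₂ ∈ [0, π/2). Then ω(XY) ≤ sec(α₁) sec(α₂) ω(X) ω(Y). -/
open Matrix Complex
open scoped ComplexOrder

/-- Hermitian real part `(X + Xᴴ)/2`. -/
noncomputable def reM {m : ℕ} (X : Matrix (Fin m) (Fin m) ℂ) : Matrix (Fin m) (Fin m) ℂ :=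
  (1 / 2 : ℂ) • (X + Xᴴ)

/-- Hermitian imaginary part `(X - Xᴴ)/(2i)`. -/
noncomputable def imM {m : ℕ} (X : Matrix (Fin m) (Fin m) ℂ) : Matrix (Fin m) (Fin m) ℂ :=
  (-Complex.I / 2) • (X - Xᴴ)

/-- Numerical range `W(X) = {⟨Xx, x⟩ : ‖x‖ = 1}`. -/
noncomputable def numRange {m : ℕ} (X : Matrix (Fin m) (Fin m) ℂ) : Set ℂ :=
  {z | ∃ x : EuclideanSpace ℂ (Fin m), ‖x‖ = 1 ∧ z = star (x : Fin m → ℂ) ⬝ᵥ X.mulVec x}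

/-- Numerical radius `ω(X) = sup {|z| : z ∈ W(X)}`. -/
noncomputable def numRadius {m : ℕ} (X : Matrix (Fin m) (Fin m) ℂ) : ℝ :=
  sSup ((fun z : ℂ => ‖z‖) '' numRange X)

/-- The sector `S_α`. -/
def sector (α : ℝ) : Set ℂ := {z : ℂ | 0 < z.re ∧ |z.im| ≤ Real.tan α * z.re}

/-- Operator norm of a matrix acting on Euclidean space. -/
noncomputable def opNorm {m : ℕ} (X : Matrix (Fin m) (Fin m) ℂ) : ℝ :=
  ‖Matrix.toEuclideanCLM (𝕜 := ℂ) X‖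

/-!
Multiplying by a unimodular scalar changes neither the operator norm nor the numerical radius, and
`ω(XY) ≤ ‖XY‖ ≤ ‖X‖ ‖Y‖`, so it suffices to show `‖A‖ ≤ sec α · ω(A)` when `W(A) ⊆ S_α`.
Write `A = H + iK` with `H = Re A` and `K = Im A`; the sector condition says `H > 0` and
`-tan α • H ≤ K ≤ tan α • H`. With `S = H^{1/2}` one gets `A = S (1 + iT) S`, where
`T = S⁻¹ K S⁻¹` is self-adjoint with `‖T‖ ≤ tan α`, so
`‖A‖ ≤ ‖S‖² ‖1 + iT‖ ≤ ‖H‖ √(1 + tan² α) = sec α · ‖H‖`, and `‖H‖ ≤ ω(A)`.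
-/

open scoped ComplexStarModule Matrix.Norms.L2Operator MatrixOrder

section CStarAlgebra

variable {A : Type*} [CStarAlgebra A]

lemma IsSelfAdjoint.norm_one_add_I_smul_le {a : A} (ha : IsSelfAdjoint a) :
    ‖1 + I • a‖ ≤ √(1 + ‖a‖ ^ 2) := by
  nontriviality A
  refine Real.le_sqrt_of_sq_le ?_
  have hstar : star (1 + I • a) * (1 + I • a) = 1 + a * a := by
    rw [star_add, star_one, star_smul, ha.star_eq, Complex.star_def, conj_I, add_mul, mul_add,
      mul_add, one_mul, mul_one, one_mul, smul_mul_smul_comm, neg_mul, I_mul_I, neg_neg, one_smul,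
      neg_smul]
    abel
  calc ‖1 + I • a‖ ^ 2 = ‖1 + a * a‖ := by rw [sq, ← CStarRing.norm_star_mul_self, hstar]
    _ ≤ 1 + ‖a‖ ^ 2 := by
      grw [norm_add_le, norm_one, norm_mul_le, sq]

variable [PartialOrder A] [StarOrderedRing A]

lemma IsSelfAdjoint.norm_le_of_neg_le_of_le {a : A} (ha : IsSelfAdjoint a) {t : ℝ} (ht : 0 ≤ t)
    (hge : -algebraMap ℝ A t ≤ a) (hle : a ≤ algebraMap ℝ A t) : ‖a‖ ≤ t := by
  rw [← cfc_id' ℝ a]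
  refine norm_cfc_le ht fun x hx => abs_le.mpr ⟨?_, (le_algebraMap_iff_spectrum_le ha).mp hle x hx⟩
  rw [← map_neg] at hge
  exact (algebraMap_le_iff_le_spectrum ha).mp hge x hx

lemma norm_le_sqrt_one_add_sq_mul_norm_realPart {a : A} {t : ℝ} (ht : 0 ≤ t)
    (hre : IsStrictlyPositive (ℜ a : A)) (hge : -(t • (ℜ a : A)) ≤ ℑ a)
    (hle : (ℑ a : A) ≤ t • (ℜ a : A)) :
    ‖a‖ ≤ √(1 + t ^ 2) * ‖(ℜ a : A)‖ := by
  set h : A := (ℜ a : A)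
  set k : A := (ℑ a : A)
  set s := CFC.sqrt h
  have hs_unit : IsUnit s := CFC.isUnit_sqrt_iff_isStrictlyPositive.mpr hre
  have hs : IsSelfAdjoint s := (CFC.sqrt_nonneg h).isSelfAdjoint
  have hss : s * s = h := CFC.sqrt_mul_sqrt_self h hre.nonneg
  set r := Ring.inverse s
  have hr : IsSelfAdjoint r := hs.ringInverse
  have hrs : r * s = 1 := Ring.inverse_mul_cancel s hs_unit
  have hsr : s * r = 1 := Ring.mul_inverse_cancel s hs_unit
  have hrhr : r * h * r = 1 := by rw [← hss, ← mul_assoc, hrs, one_mul, hsr]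
  set T := r * k * r
  have hT : IsSelfAdjoint T := by simpa only [hr.star_eq] using (ℑ a).prop.conjugate' r
  have hT_ge : -algebraMap ℝ A t ≤ T := by
    simpa only [hr.star_eq, mul_neg, neg_mul, mul_smul_comm, smul_mul_assoc, hrhr,
      Algebra.algebraMap_eq_smul_one] using star_left_conjugate_le_conjugate hge r
  have hT_le : T ≤ algebraMap ℝ A t := by
    simpa only [hr.star_eq, mul_smul_comm, smul_mul_assoc, hrhr,
      Algebra.algebraMap_eq_smul_one] using star_left_conjugate_le_conjugate hle r
  have ha : a = s * (1 + I • T) * s := by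
    have hsTs : s * T * s = k := by
      simp only [T, ← mul_assoc, hsr, one_mul]; rw [mul_assoc, hrs, mul_one]
    rw [mul_add, add_mul, mul_one, hss, mul_smul_comm, smul_mul_assoc, hsTs]
    exact (realPart_add_I_smul_imaginaryPart a).symm
  have hs_norm : ‖s‖ * ‖s‖ = ‖h‖ := by rw [← CStarRing.norm_star_mul_self, hs.star_eq, hss]
  calc ‖a‖ ≤ ‖s‖ * ‖1 + I • T‖ * ‖s‖ := ha ▸ norm_mul₃_le
    _ = ‖1 + I • T‖ * ‖h‖ := by rw [← hs_norm]; ring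
    _ ≤ √(1 + t ^ 2) * ‖h‖ := by
      gcongr
      exact hT.norm_one_add_I_smul_le.trans
        (by gcongr; exact hT.norm_le_of_neg_le_of_le ht hT_ge hT_le)

end CStarAlgebra

namespace Matrix

variable {ι : Type*} [Fintype ι]

lemma star_dotProduct_conjTranspose_mulVec (M : Matrix ι ι ℂ) (x : ι → ℂ) :
    star x ⬝ᵥ Mᴴ *ᵥ x = star (star x ⬝ᵥ M *ᵥ x) := by
  rw [dotProduct_mulVec, star_dotProduct, ← star_mulVec, star_star, dotProduct_comm]

lemma star_dotProduct_realPart_mulVec (M : Matrix ι ι ℂ) (x : ι → ℂ) :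
    star x ⬝ᵥ (ℜ M : Matrix ι ι ℂ) *ᵥ x = (star x ⬝ᵥ M *ᵥ x).re := by
  rw [realPart_apply_coe, smul_mulVec, add_mulVec, dotProduct_smul, dotProduct_add,
    star_eq_conjTranspose, star_dotProduct_conjTranspose_mulVec, Complex.star_def,
    Complex.add_conj, Complex.real_smul]
  push_cast
  ring

lemma star_dotProduct_imaginaryPart_mulVec (M : Matrix ι ι ℂ) (x : ι → ℂ) :
    star x ⬝ᵥ (ℑ M : Matrix ι ι ℂ) *ᵥ x = (star x ⬝ᵥ M *ᵥ x).im := by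
  rw [imaginaryPart_apply_coe, smul_mulVec, smul_mulVec, sub_mulVec, dotProduct_smul,
    dotProduct_smul, dotProduct_sub, star_eq_conjTranspose, star_dotProduct_conjTranspose_mulVec,
    Complex.star_def, Complex.sub_conj, Complex.real_smul, smul_eq_mul]
  push_cast
  linear_combination (-(star x ⬝ᵥ M *ᵥ x).im : ℂ) * I_sq

lemma re_star_dotProduct_algebraMap_mulVec [DecidableEq ι] (r : ℝ) (x : ι → ℂ) :
    (star x ⬝ᵥ algebraMap ℝ (Matrix ι ι ℂ) r *ᵥ x).re = r * (star x ⬝ᵥ x).re := by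
  rw [Algebra.algebraMap_eq_smul_one, smul_mulVec, one_mulVec, dotProduct_smul, Complex.real_smul,
    re_ofReal_mul]

lemma le_of_forall_re_star_dotProduct_mulVec_le {M N : Matrix ι ι ℂ} (hM : M.IsHermitian)
    (hN : N.IsHermitian) (h : ∀ x, (star x ⬝ᵥ M *ᵥ x).re ≤ (star x ⬝ᵥ N *ᵥ x).re) : M ≤ N := by
  refine le_iff.mpr (PosSemidef.of_dotProduct_mulVec_nonneg (hN.sub hM) fun x => ?_)
  rw [sub_mulVec, dotProduct_sub, Complex.le_def]
  have hMx := hM.im_star_dotProduct_mulVec_self x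
  have hNx := hN.im_star_dotProduct_mulVec_self x
  simp only [RCLike.im_to_complex] at hMx hNx
  simp [hMx, hNx, h x]

end Matrix

section NumericalRange

variable {n : ℕ}

lemma div_mem_numRange (M : Matrix (Fin n) (Fin n) ℂ) {x : Fin n → ℂ} (hx : x ≠ 0) :
    (star x ⬝ᵥ M *ᵥ x) / (star x ⬝ᵥ x) ∈ numRange M := by
  set y : EuclideanSpace ℂ (Fin n) := WithLp.toLp 2 x
  have hy : 0 < ‖y‖ := norm_pos_iff.mpr (by simpa [y] using hx)
  have hxx : star x ⬝ᵥ x = (‖y‖ : ℂ) ^ 2 := by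
    rw [dotProduct_comm, ← EuclideanSpace.inner_eq_star_dotProduct]
    exact inner_self_eq_norm_sq_to_K y
  refine ⟨((‖y‖⁻¹ : ℝ) : ℂ) • y, ?_, ?_⟩
  · rw [norm_smul, norm_real, Real.norm_eq_abs, abs_inv, abs_norm, inv_mul_cancel₀ hy.ne']
  · rw [WithLp.ofLp_smul, star_smul, mulVec_smul, dotProduct_smul, smul_dotProduct, hxx]
    simp only [smul_eq_mul, star_def, conj_ofReal]
    push_cast
    field_simp
    rfl

lemma norm_le_of_mem_numRange {M : Matrix (Fin n) (Fin n) ℂ} {q : ℂ} (hq : q ∈ numRange M) :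
    ‖q‖ ≤ ‖M‖ := by
  obtain ⟨x, hx, rfl⟩ := hq
  calc ‖star (x : Fin n → ℂ) ⬝ᵥ M *ᵥ x‖ = ‖inner ℂ x (toEuclideanCLM (𝕜 := ℂ) M x)‖ := by
        rw [EuclideanSpace.inner_eq_star_dotProduct, ofLp_toEuclideanCLM, dotProduct_comm]
    _ ≤ ‖x‖ * ‖toEuclideanCLM (𝕜 := ℂ) M x‖ := norm_inner_le_norm _ _
    _ ≤ ‖x‖ * (‖M‖ * ‖x‖) := by gcongr; exact (toEuclideanCLM (𝕜 := ℂ) M).le_opNorm x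
    _ = ‖M‖ := by rw [hx]; ring

lemma bddAbove_norm_numRange (M : Matrix (Fin n) (Fin n) ℂ) :
    BddAbove ((‖·‖) '' numRange M) :=
  ⟨‖M‖, by rintro _ ⟨q, hq, rfl⟩; exact norm_le_of_mem_numRange hq⟩

lemma norm_le_numRadius_of_mem_numRange {M : Matrix (Fin n) (Fin n) ℂ} {q : ℂ}
    (hq : q ∈ numRange M) : ‖q‖ ≤ numRadius M :=
  le_csSup (bddAbove_norm_numRange M) ⟨q, hq, rfl⟩

lemma numRadius_nonneg (M : Matrix (Fin n) (Fin n) ℂ) : 0 ≤ numRadius M :=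
  Real.sSup_nonneg (by rintro _ ⟨q, -, rfl⟩; exact norm_nonneg q)

lemma numRadius_le_norm (M : Matrix (Fin n) (Fin n) ℂ) : numRadius M ≤ ‖M‖ :=
  Real.sSup_le (by rintro _ ⟨q, hq, rfl⟩; exact norm_le_of_mem_numRange hq) (norm_nonneg M)

lemma numRange_smul (c : ℂ) (M : Matrix (Fin n) (Fin n) ℂ) :
    numRange (c • M) = (c * ·) '' numRange M := by
  ext q
  simp only [numRange, smul_mulVec, dotProduct_smul, smul_eq_mul, Set.mem_image, Set.mem_ofPred_eq]
  constructor
  · rintro ⟨x, hx, rfl⟩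
    exact ⟨_, ⟨x, hx, rfl⟩, rfl⟩
  · rintro ⟨_, ⟨x, hx, rfl⟩, rfl⟩
    exact ⟨x, hx, rfl⟩

lemma numRadius_smul_of_norm_eq_one {c : ℂ} (hc : ‖c‖ = 1) (M : Matrix (Fin n) (Fin n) ℂ) :
    numRadius (c • M) = numRadius M := by
  simp only [numRadius, numRange_smul, Set.image_image, norm_mul, hc, one_mul]

lemma norm_star_dotProduct_mulVec_le (M : Matrix (Fin n) (Fin n) ℂ) (x : Fin n → ℂ) :
    ‖star x ⬝ᵥ M *ᵥ x‖ ≤ numRadius M * (star x ⬝ᵥ x).re := by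
  rcases eq_or_ne x 0 with rfl | hx
  · simp
  have hd : 0 < star x ⬝ᵥ x := dotProduct_star_self_pos_iff.mpr hx
  have h := norm_le_numRadius_of_mem_numRange (div_mem_numRange M hx)
  rwa [norm_div, ← re_eq_norm.mpr hd.le, div_le_iff₀ (Complex.lt_def.mp hd).1] at h

lemma norm_realPart_le_numRadius (M : Matrix (Fin n) (Fin n) ℂ) :
    ‖(ℜ M : Matrix (Fin n) (Fin n) ℂ)‖ ≤ numRadius M := by
  have hbound x := (abs_re_le_norm _).trans (norm_star_dotProduct_mulVec_le M x)
  have hr : (algebraMap ℝ (Matrix (Fin n) (Fin n) ℂ) (numRadius M)).IsHermitian :=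
    isHermitian_iff_isSelfAdjoint.mpr (.algebraMap _ (.all _))
  have hre := isHermitian_iff_isSelfAdjoint.mpr (ℜ M).prop
  refine (ℜ M).prop.norm_le_of_neg_le_of_le (numRadius_nonneg M)
    (le_of_forall_re_star_dotProduct_mulVec_le hr.neg hre fun x => ?_)
    (le_of_forall_re_star_dotProduct_mulVec_le hre hr fun x => ?_)
  · rw [neg_mulVec, dotProduct_neg, neg_re, re_star_dotProduct_algebraMap_mulVec,
      star_dotProduct_realPart_mulVec, ofReal_re]
    exact neg_le_of_abs_le (hbound x)
  · rw [re_star_dotProduct_algebraMap_mulVec, star_dotProduct_realPart_mulVec, ofReal_re]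
    exact le_of_abs_le (hbound x)

end NumericalRange

section Sectorial

lemma mul_mem_sector {α : ℝ} {d q : ℂ} (hd : 0 < d) (hq : q ∈ sector α) : d * q ∈ sector α := by
  obtain ⟨hd_re, hd_im⟩ := Complex.lt_def.mp hd
  obtain ⟨hq_re, hq_im⟩ := hq
  simp only [zero_re, zero_im] at hd_re hd_im
  refine ⟨?_, ?_⟩
  · simpa [mul_re, ← hd_im] using mul_pos hd_re hq_re
  · simp only [mul_re, mul_im, ← hd_im, zero_mul, sub_zero, add_zero, abs_mul,
      abs_of_pos hd_re]
    nlinarith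

variable {n : ℕ} {M : Matrix (Fin n) (Fin n) ℂ} {α : ℝ}

lemma star_dotProduct_mulVec_mem_sector (hM : numRange M ⊆ sector α) {x : Fin n → ℂ}
    (hx : x ≠ 0) : star x ⬝ᵥ M *ᵥ x ∈ sector α := by
  have hd : 0 < star x ⬝ᵥ x := dotProduct_star_self_pos_iff.mpr hx
  simpa only [mul_div_cancel₀ _ hd.ne'] using mul_mem_sector hd (hM (div_mem_numRange M hx))

lemma abs_im_star_dotProduct_mulVec_le_tan_mul_re (hM : numRange M ⊆ sector α) (x : Fin n → ℂ) :
    |(star x ⬝ᵥ M *ᵥ x).im| ≤ Real.tan α * (star x ⬝ᵥ M *ᵥ x).re := by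
  rcases eq_or_ne x 0 with rfl | hx
  · simp
  · exact (star_dotProduct_mulVec_mem_sector hM hx).2

lemma isStrictlyPositive_realPart (hM : numRange M ⊆ sector α) :
    IsStrictlyPositive (ℜ M : Matrix (Fin n) (Fin n) ℂ) := by
  refine isStrictlyPositive_iff_posDef.mpr <| .of_dotProduct_mulVec_pos
    (isHermitian_iff_isSelfAdjoint.mpr (ℜ M).prop) fun x hx => ?_
  rw [star_dotProduct_realPart_mulVec]
  exact_mod_cast (star_dotProduct_mulVec_mem_sector hM hx).1

lemma neg_tan_smul_realPart_le_imaginaryPart (hM : numRange M ⊆ sector α) :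
    -(Real.tan α • (ℜ M : Matrix (Fin n) (Fin n) ℂ)) ≤ ℑ M := by
  refine le_of_forall_re_star_dotProduct_mulVec_le
    (isHermitian_iff_isSelfAdjoint.mpr ((IsSelfAdjoint.all (Real.tan α)).smul (ℜ M).prop).neg)
    (isHermitian_iff_isSelfAdjoint.mpr (ℑ M).prop) fun x => ?_
  rw [neg_mulVec, dotProduct_neg, neg_re, smul_mulVec, dotProduct_smul, real_smul, re_ofReal_mul,
    star_dotProduct_realPart_mulVec, star_dotProduct_imaginaryPart_mulVec, ofReal_re, ofReal_re]
  exact neg_le_of_abs_le (abs_im_star_dotProduct_mulVec_le_tan_mul_re hM x)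

lemma imaginaryPart_le_tan_smul_realPart (hM : numRange M ⊆ sector α) :
    (ℑ M : Matrix (Fin n) (Fin n) ℂ) ≤ Real.tan α • (ℜ M : Matrix (Fin n) (Fin n) ℂ) := by
  refine le_of_forall_re_star_dotProduct_mulVec_le
    (isHermitian_iff_isSelfAdjoint.mpr (ℑ M).prop)
    (isHermitian_iff_isSelfAdjoint.mpr ((IsSelfAdjoint.all (Real.tan α)).smul (ℜ M).prop))
    fun x => ?_
  rw [smul_mulVec, dotProduct_smul, real_smul, re_ofReal_mul,
    star_dotProduct_realPart_mulVec, star_dotProduct_imaginaryPart_mulVec, ofReal_re, ofReal_re]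
  exact le_of_abs_le (abs_im_star_dotProduct_mulVec_le_tan_mul_re hM x)

lemma norm_le_inv_cos_mul_numRadius (hα : α ∈ Set.Ico 0 (Real.pi / 2))
    (hM : numRange M ⊆ sector α) : ‖M‖ ≤ (Real.cos α)⁻¹ * numRadius M := by
  have hcos : 0 < Real.cos α :=
    Real.cos_pos_of_mem_Ioo ⟨by linarith [hα.1, Real.pi_pos], hα.2⟩
  have htan : 0 ≤ Real.tan α := Real.tan_nonneg_of_nonneg_of_le_pi_div_two hα.1 hα.2.le
  calc ‖M‖ ≤ √(1 + Real.tan α ^ 2) * ‖(ℜ M : Matrix (Fin n) (Fin n) ℂ)‖ :=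
        norm_le_sqrt_one_add_sq_mul_norm_realPart htan (isStrictlyPositive_realPart hM)
          (neg_tan_smul_realPart_le_imaginaryPart hM) (imaginaryPart_le_tan_smul_realPart hM)
    _ ≤ √(1 + Real.tan α ^ 2) * numRadius M := by gcongr; exact norm_realPart_le_numRadius M
    _ = (Real.cos α)⁻¹ * numRadius M := by
      rw [← inv_inv (1 + _), Real.inv_one_add_tan_sq hcos.ne', Real.sqrt_inv, Real.sqrt_sq hcos.le]

end Sectorial

theorem numRadius_mul_le_sec_sec {n : ℕ} (X Y : Matrix (Fin n) (Fin n) ℂ)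
    (α₁ α₂ : ℝ) (hα₁ : α₁ ∈ Set.Ico 0 (Real.pi / 2)) (hα₂ : α₂ ∈ Set.Ico 0 (Real.pi / 2))
    (z w : ℂ) (hz : ‖z‖ = 1) (hw : ‖w‖ = 1)
    (hX : numRange (z • X) ⊆ sector α₁) (hY : numRange (w • Y) ⊆ sector α₂) :
    numRadius (X * Y) ≤ (Real.cos α₁)⁻¹ * (Real.cos α₂)⁻¹ * numRadius X * numRadius Y := by
  have hX' : ‖X‖ ≤ (Real.cos α₁)⁻¹ * numRadius X := by
    simpa only [norm_smul, hz, one_mul, numRadius_smul_of_norm_eq_one hz] using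
      norm_le_inv_cos_mul_numRadius hα₁ hX
  have hY' : ‖Y‖ ≤ (Real.cos α₂)⁻¹ * numRadius Y := by
    simpa only [norm_smul, hw, one_mul, numRadius_smul_of_norm_eq_one hw] using
      norm_le_inv_cos_mul_numRadius hα₂ hY
  calc numRadius (X * Y) ≤ ‖X‖ * ‖Y‖ := (numRadius_le_norm _).trans (norm_mul_le X Y)
    _ ≤ ((Real.cos α₁)⁻¹ * numRadius X) * ((Real.cos α₂)⁻¹ * numRadius Y) :=
      mul_le_mul hX' hY' (norm_nonneg Y) ((norm_nonneg X).trans hX')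
    _ = (Real.cos α₁)⁻¹ * (Real.cos α₂)⁻¹ * numRadius X * numRadius Y := by ring
end

section
/- Let T ∈ M_n(ℂ) with W(T) ⊂ S_α for some α ∈ [0, π/2). Then the 2n×2n block matrix [[sec(α) Re(T), T],[T*, sec(α) Re(T)]] is positive semidefinite. -/
open Matrix Complex
open scoped ComplexOrder

/-!
Write `T = R + iS` with `R = reM T`, `S = imM T` Hermitian. Scaling the sector condition from unit
vectors to all vectors gives `|⟨Sx, x⟩| ≤ tan α ⟨Rx, x⟩`, i.e. `sin α • R ± cos α • S ≥ 0`. For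
`α > 0`, the positive multiples `Q, P` of these two matrices by `(2 sin α cos α)⁻¹` satisfy
`sec α • R = Q + P` and `T = e^{iα} Q + e^{-iα} P`; for `α = 0`, `T` itself is positive and one
takes `Q = T`, `P = 0`. The block matrix is then the sum of `[[Q, uQ], [ūQ, Q]]` and
`[[P, ūP], [uP, P]]` with `|u| = 1`, and each of these is `Xᴴ Q X` with `X = [1  u•1]`.
-/

namespace Matrix

variable {m : Type*} [Fintype m]

lemma star_dotProduct_conjTranspose_mulVec_s11 {R : Type*} [CommRing R] [StarRing R]
    (A : Matrix m m R) (x : m → R) :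
    star x ⬝ᵥ Aᴴ *ᵥ x = star (star x ⬝ᵥ A *ᵥ x) := by
  rw [dotProduct_mulVec, ← star_mulVec, star_dotProduct]

lemma star_dotProduct_mulVec_real_smul (A : Matrix m m ℂ) (t : ℝ) (x : m → ℂ) :
    star (t • x) ⬝ᵥ A *ᵥ (t • x) = (t ^ 2 : ℝ) • (star x ⬝ᵥ A *ᵥ x) := by
  rw [star_smul, star_trivial, mulVec_smul, smul_dotProduct, dotProduct_smul, smul_smul, sq]

lemma posSemidef_of_forall_star_dotProduct_mulVec_nonneg [DecidableEq m] {A : Matrix m m ℂ}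
    (hA : ∀ x, 0 ≤ star x ⬝ᵥ A *ᵥ x) : A.PosSemidef := by
  rw [← isPositive_toEuclideanLin_iff, LinearMap.isPositive_iff_complex]
  intro x
  obtain ⟨hre, him⟩ := Complex.nonneg_iff.mp (hA x)
  have hconj : x.ofLp ⬝ᵥ star (A *ᵥ x.ofLp) = star (star x.ofLp ⬝ᵥ A *ᵥ x.ofLp) := by
    rw [star_dotProduct, star_star, dotProduct_comm]
  simp only [EuclideanSpace.inner_eq_star_dotProduct, toLpLin_apply, RCLike.re_to_complex, hconj]
  exact ⟨Complex.ext (by simp) (by simp [← him]), by simpa using hre⟩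

lemma posSemidef_fromBlocks_smul {𝕜 : Type*} [RCLike 𝕜] {Q : Matrix m m 𝕜}
    (hQ : Q.PosSemidef) {u : 𝕜} (hu : star u * u = 1) :
    (fromBlocks Q (u • Q) (star u • Q) Q).PosSemidef := by
  classical
  have := hQ.conjTranspose_mul_mul_same (fromCols (1 : Matrix m m 𝕜) (u • (1 : Matrix m m 𝕜)))
  rwa [conjTranspose_fromCols_eq_fromRows_conjTranspose, fromRows_mul, fromRows_mul_fromCols,
    conjTranspose_smul, conjTranspose_one, smul_mul_assoc, smul_mul_assoc, smul_mul_assoc,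
    mul_smul_comm, smul_smul, hu, one_mul, one_smul, mul_one] at this

end Matrix

section

variable {n : ℕ}

lemma star_dotProduct_reM_mulVec (T : Matrix (Fin n) (Fin n) ℂ) (x : Fin n → ℂ) :
    star x ⬝ᵥ reM T *ᵥ x = ((star x ⬝ᵥ T *ᵥ x).re : ℂ) := by
  rw [reM, smul_mulVec, add_mulVec, dotProduct_smul, dotProduct_add,
    star_dotProduct_conjTranspose_mulVec_s11, Complex.star_def, Complex.re_eq_add_conj, smul_eq_mul]
  ring

lemma star_dotProduct_imM_mulVec (T : Matrix (Fin n) (Fin n) ℂ) (x : Fin n → ℂ) :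
    star x ⬝ᵥ imM T *ᵥ x = ((star x ⬝ᵥ T *ᵥ x).im : ℂ) := by
  rw [imM, smul_mulVec, sub_mulVec, dotProduct_smul, dotProduct_sub,
    star_dotProduct_conjTranspose_mulVec_s11, Complex.star_def, Complex.im_eq_sub_conj, smul_eq_mul]
  field_simp
  rw [I_sq, neg_one_mul, neg_neg]

lemma reM_add_I_smul_imM (T : Matrix (Fin n) (Fin n) ℂ) : reM T + I • imM T = T := by
  ext i j
  simp only [reM, imM, Matrix.add_apply, Matrix.smul_apply, Matrix.sub_apply,
    conjTranspose_apply, smul_eq_mul, Complex.star_def]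
  linear_combination (starRingEnd ℂ (T j i) - T i j) / 2 * I_sq

lemma re_nonneg_and_abs_im_le_of_numRange_subset_sector {T : Matrix (Fin n) (Fin n) ℂ} {α : ℝ}
    (h : numRange T ⊆ sector α) (x : Fin n → ℂ) :
    0 ≤ (star x ⬝ᵥ T *ᵥ x).re ∧ |(star x ⬝ᵥ T *ᵥ x).im| ≤ Real.tan α * (star x ⬝ᵥ T *ᵥ x).re := by
  obtain rfl | hx := eq_or_ne x 0
  · simp
  set v : EuclideanSpace ℂ (Fin n) := WithLp.toLp 2 x
  have hv : ‖v‖ ≠ 0 := by simpa [v] using hx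
  obtain ⟨hre, him⟩ := h ⟨‖v‖⁻¹ • v, norm_smul_inv_norm (by simpa [v] using hx), rfl⟩
  have hx_eq : x = ‖v‖ • (‖v‖⁻¹ • v).ofLp := by simp [v, smul_smul, hv]
  rw [hx_eq, star_dotProduct_mulVec_real_smul, Complex.smul_re, Complex.smul_im, smul_eq_mul,
    smul_eq_mul, abs_mul, abs_of_nonneg (by positivity), mul_left_comm]
  exact ⟨by positivity, mul_le_mul_of_nonneg_left him (by positivity)⟩

lemma posSemidef_of_numRange_subset_sector_zero {T : Matrix (Fin n) (Fin n) ℂ}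
    (h : numRange T ⊆ sector 0) : T.PosSemidef :=
  posSemidef_of_forall_star_dotProduct_mulVec_nonneg fun x => by
    obtain ⟨hre, him⟩ := re_nonneg_and_abs_im_le_of_numRange_subset_sector h x
    rw [Real.tan_zero, zero_mul, abs_nonpos_iff] at him
    exact Complex.nonneg_iff.mpr ⟨hre, him.symm⟩

lemma posSemidef_sin_smul_reM_add_cos_smul_imM {T : Matrix (Fin n) (Fin n) ℂ} {α : ℝ}
    (h : numRange T ⊆ sector α) (hcos : 0 < Real.cos α) {ε : ℝ} (hε : |ε| ≤ 1) :
    ((Real.sin α : ℂ) • reM T + ((ε * Real.cos α : ℝ) : ℂ) • imM T).PosSemidef := by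
  refine posSemidef_of_forall_star_dotProduct_mulVec_nonneg fun x => ?_
  obtain ⟨-, him⟩ := re_nonneg_and_abs_im_le_of_numRange_subset_sector h x
  set z := star x ⬝ᵥ T *ᵥ x
  have hquad : star x ⬝ᵥ ((Real.sin α : ℂ) • reM T + ((ε * Real.cos α : ℝ) : ℂ) • imM T) *ᵥ x
      = ((Real.sin α * z.re + ε * Real.cos α * z.im : ℝ) : ℂ) := by
    rw [add_mulVec, smul_mulVec, smul_mulVec, dotProduct_add, dotProduct_smul, dotProduct_smul,
      star_dotProduct_reM_mulVec, star_dotProduct_imM_mulVec, smul_eq_mul, smul_eq_mul]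
    push_cast
    ring
  have hcos_im : Real.cos α * |z.im| ≤ Real.sin α * z.re := by
    calc Real.cos α * |z.im| ≤ Real.cos α * (Real.tan α * z.re) :=
          mul_le_mul_of_nonneg_left him hcos.le
      _ = Real.sin α * z.re := by rw [Real.tan_eq_sin_div_cos]; field_simp
  have hε_im : |ε * z.im| ≤ |z.im| := by
    rw [abs_mul]
    exact mul_le_of_le_one_left (abs_nonneg _) hε
  rw [hquad, Complex.zero_le_real]
  nlinarith [neg_abs_le (ε * z.im), mul_le_mul_of_nonneg_left hε_im hcos.le]

lemma exists_posSemidef_reM_eq_add_and_eq_exp_smul_add {T : Matrix (Fin n) (Fin n) ℂ} {α : ℝ}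
    (hα : α ∈ Set.Ico 0 (Real.pi / 2)) (h : numRange T ⊆ sector α) :
    ∃ Q P : Matrix (Fin n) (Fin n) ℂ, Q.PosSemidef ∧ P.PosSemidef ∧
      (((Real.cos α)⁻¹ : ℝ) : ℂ) • reM T = Q + P ∧
      T = exp (α * I) • Q + star (exp (α * I)) • P := by
  rcases hα.1.eq_or_lt with rfl | hα0
  · have hT := posSemidef_of_numRange_subset_sector_zero h
    refine ⟨T, 0, hT, .zero, ?_, ?_⟩
    · rw [Real.cos_zero, inv_one, ofReal_one, one_smul, reM, hT.isHermitian.eq, ← two_smul ℂ T,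
        smul_smul, add_zero]
      norm_num
    · simp
  have hsin : 0 < Real.sin α := Real.sin_pos_of_pos_of_lt_pi hα0 (by linarith [hα.2, Real.pi_pos])
  have hcos : 0 < Real.cos α := Real.cos_pos_of_mem_Ioo ⟨by linarith [hα.1, Real.pi_pos], hα.2⟩
  have hsC : sin (α : ℂ) ≠ 0 := by exact_mod_cast hsin.ne'
  have hcC : cos (α : ℂ) ≠ 0 := by exact_mod_cast hcos.ne'
  set r : ℝ := (2 * Real.sin α * Real.cos α)⁻¹
  have hr : (0 : ℂ) ≤ r := Complex.zero_le_real.mpr (by positivity)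
  refine ⟨(r : ℂ) • ((Real.sin α : ℂ) • reM T + ((1 * Real.cos α : ℝ) : ℂ) • imM T),
    (r : ℂ) • ((Real.sin α : ℂ) • reM T + ((-1 * Real.cos α : ℝ) : ℂ) • imM T),
    (posSemidef_sin_smul_reM_add_cos_smul_imM h hcos (by norm_num)).smul hr,
    (posSemidef_sin_smul_reM_add_cos_smul_imM h hcos (by norm_num)).smul hr, ?_, ?_⟩
  · simp only [r]
    push_cast
    match_scalars
    · field_simp
      ring
    · ring
  · conv_lhs => rw [← reM_add_I_smul_imM T]
    rw [exp_mul_I, ← ofReal_cos, ← ofReal_sin, star_def, map_add, map_mul, conj_ofReal,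
      conj_ofReal, conj_I]
    simp only [r]
    push_cast
    match_scalars
    · field_simp
      ring
    · field_simp
      ring

end

theorem fromBlocks_posSemidef_of_sector {n : ℕ} (T : Matrix (Fin n) (Fin n) ℂ) (α : ℝ)
    (hα : α ∈ Set.Ico 0 (Real.pi / 2)) (h : numRange T ⊆ sector α) :
    (Matrix.fromBlocks ((((Real.cos α)⁻¹ : ℝ) : ℂ) • reM T) T
      Tᴴ ((((Real.cos α)⁻¹ : ℝ) : ℂ) • reM T)).PosSemidef := by
  obtain ⟨Q, P, hQ, hP, hreM, hT⟩ := exists_posSemidef_reM_eq_add_and_eq_exp_smul_add hα h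
  set u := exp (α * I)
  have hu : star u * u = 1 := by
    rw [star_def, conj_mul', norm_exp_ofReal_mul_I, ofReal_one, one_pow]
  have hTH : Tᴴ = star u • Q + u • P := by
    rw [hT, conjTranspose_add, conjTranspose_smul, conjTranspose_smul, hQ.isHermitian.eq,
      hP.isHermitian.eq, star_star]
  have hblocks : fromBlocks ((((Real.cos α)⁻¹ : ℝ) : ℂ) • reM T) T
      Tᴴ ((((Real.cos α)⁻¹ : ℝ) : ℂ) • reM T) =
      fromBlocks Q (u • Q) (star u • Q) Q + fromBlocks P (star u • P) (star (star u) • P) P := by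
    rw [fromBlocks_add, star_star, ← hreM, ← hT, ← hTH]
  rw [hblocks]
  exact (posSemidef_fromBlocks_smul hQ hu).add
    (posSemidef_fromBlocks_smul hP (by rw [star_star, mul_comm, hu]))
end
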